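/- Let (L,[·,·]) be a Lie algebra over a field F of characteristic 0 with representation ρ: L → End(V). Let φ₁, φ₂ be Lie algebra 2-cocycles lying in the same cohomology class, i.e. φ₂ − φ₁ = ∂_ρ(α) for some linear map α: L → V, and define ω_i(x,y,z) := φ_i([x,y],z) − ρ(z)φ_i(x,y) for i = 1,2. Then ω₁ and ω₂ lie in the same cohomology class of the associated Lie triple system: ω₂(x,y,z) − ω₁(x,y,z) = D_ρ(x,y)α(z) − θ_ρ(x,z)α(y) + θ_ρ(y,z)α(x) − α([[x,y],z]) for all x,y,z ∈ L, i.e. ω₂ − ω₁ is the Yamaguti coboundary δ¹(α). -/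

import Mathlib

variable {F L V : Type*} [Field F] [CharZero F] [LieRing L] [LieAlgebra F L]
  [AddCommGroup V] [Module F V]

/-- `θ_ρ(x,y) := ρ(y)ρ(x)`, the representation of the associated Lie triple system. -/
def thetaRho (ρ : L →ₗ[F] Module.End F V) (x y : L) : Module.End F V := ρ y * ρ x

/-- `D_ρ(x,y) := θ_ρ(y,x) − θ_ρ(x,y)`. -/
def DRho (ρ : L →ₗ[F] Module.End F V) (x y : L) : Module.End F V :=
  thetaRho ρ y x - thetaRho ρ x y

def ceCoboundary {R : Type*} [CommRing R] [LieAlgebra R L] [Module R V]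
    (ρ : L →ₗ[R] Module.End R V) (α : L →ₗ[R] V) (x y : L) : V :=
  ρ x (α y) - ρ y (α x) - α ⁅x, y⁆

/-- The cochain `ω` attached to `φ` in the statement. -/
def tripleOfTwoCochain {R : Type*} [CommRing R] [LieAlgebra R L] [Module R V]
    (ρ : L →ₗ[R] Module.End R V) (φ : L → L → V) (x y z : L) : V :=
  φ ⁅x, y⁆ z - ρ z (φ x y)

def yamagutiCoboundary (ρ : L →ₗ[F] Module.End F V) (α : L →ₗ[F] V) (x y z : L) : V :=
  DRho ρ x y (α z) - thetaRho ρ x z (α y) + thetaRho ρ y z (α x) - α ⁅⁅x, y⁆, z⁆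

theorem tripleOfTwoCochain_sub {R : Type*} [CommRing R] [LieAlgebra R L] [Module R V]
    (ρ : L →ₗ[R] Module.End R V) (φ ψ : L → L → V) (x y z : L) :
    tripleOfTwoCochain ρ (φ - ψ) x y z
      = tripleOfTwoCochain ρ φ x y z - tripleOfTwoCochain ρ ψ x y z := by
  simp only [tripleOfTwoCochain, Pi.sub_apply, map_sub]
  abel

omit [CharZero F] in
theorem tripleOfTwoCochain_ceCoboundary (ρ : L →ₗ[F] Module.End F V)
    (hρ : ∀ x y, ρ ⁅x, y⁆ = ρ x * ρ y - ρ y * ρ x) (α : L →ₗ[F] V) :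
    tripleOfTwoCochain ρ (ceCoboundary ρ α) = yamagutiCoboundary ρ α := by
  funext x y z
  simp only [tripleOfTwoCochain, ceCoboundary, yamagutiCoboundary, DRho, thetaRho, hρ,
    map_sub, LinearMap.sub_apply, Module.End.mul_apply]
  abel

theorem cohomologous_two_cocycles_to_cohomologous_three_cocycles_general
    (ρ : L →ₗ[F] Module.End F V)
    (hρ : ∀ x y, ρ ⁅x, y⁆ = ρ x * ρ y - ρ y * ρ x)
    (φ₁ φ₂ : L →ₗ[F] L →ₗ[F] V)
    (α : L →ₗ[F] V)
    (hcob : ∀ x y : L, φ₂ x y - φ₁ x y = ρ x (α y) - ρ y (α x) - α ⁅x, y⁆) :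
    ∀ x y z : L,
      (φ₂ ⁅x, y⁆ z - ρ z (φ₂ x y)) - (φ₁ ⁅x, y⁆ z - ρ z (φ₁ x y))
        = DRho ρ x y (α z) - thetaRho ρ x z (α y) + thetaRho ρ y z (α x)
          - α ⁅⁅x, y⁆, z⁆ := by
  intro x y z
  have hφ : (fun a b => φ₂ a b) - (fun a b => φ₁ a b) = ceCoboundary ρ α :=
    funext₂ hcob
  show tripleOfTwoCochain ρ (fun a b => φ₂ a b) x y z
      - tripleOfTwoCochain ρ (fun a b => φ₁ a b) x y z = yamagutiCoboundary ρ α x y z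
  rw [← tripleOfTwoCochain_sub, hφ, tripleOfTwoCochain_ceCoboundary ρ hρ]

/-- if the Lie algebra `2`-cocycles `φ₁, φ₂` are cohomologous,
`φ₂ − φ₁ = ∂_ρ(α)`, then the associated Lie triple system `3`-cocycles
`ω_i(x,y,z) := φ_i([x,y],z) − ρ(z)φ_i(x,y)` are cohomologous:
`ω₂ − ω₁ = δ¹(α)`, the Yamaguti coboundary of `α`. -/
theorem cohomologous_two_cocycles_to_cohomologous_three_cocycles
    (ρ : L →ₗ[F] Module.End F V)
    (hρ : ∀ x y, ρ ⁅x, y⁆ = ρ x * ρ y - ρ y * ρ x)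
    (φ₁ φ₂ : L →ₗ[F] L →ₗ[F] V)
    (halt₁ : ∀ x : L, φ₁ x x = 0) (halt₂ : ∀ x : L, φ₂ x x = 0)
    (hcoc₁ : ∀ x y z : L,
      ρ x (φ₁ y z) - ρ y (φ₁ x z) + ρ z (φ₁ x y)
        - φ₁ ⁅x, y⁆ z + φ₁ ⁅x, z⁆ y - φ₁ ⁅y, z⁆ x = 0)
    (hcoc₂ : ∀ x y z : L,
      ρ x (φ₂ y z) - ρ y (φ₂ x z) + ρ z (φ₂ x y)
        - φ₂ ⁅x, y⁆ z + φ₂ ⁅x, z⁆ y - φ₂ ⁅y, z⁆ x = 0)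
    (α : L →ₗ[F] V)
    (hcob : ∀ x y : L, φ₂ x y - φ₁ x y = ρ x (α y) - ρ y (α x) - α ⁅x, y⁆) :
    ∀ x y z : L,
      (φ₂ ⁅x, y⁆ z - ρ z (φ₂ x y)) - (φ₁ ⁅x, y⁆ z - ρ z (φ₁ x y))
        = DRho ρ x y (α z) - thetaRho ρ x z (α y) + thetaRho ρ y z (α x)
          - α ⁅⁅x, y⁆, z⁆ :=
  cohomologous_two_cocycles_to_cohomologous_three_cocycles_general ρ hρ φ₁ φ₂ α hcob
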